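/- Smooth Weighted Round Robin with integer weights is exactly proportional over a full cycle: for integer weights w_1,...,w_M > 0 with total W = Σ w_m, the SWRR process (each step add w_m to each current weight c_m, pick the argmax, subtract W from the chosen one) selects each instance m exactly w_m times in every W consecutive steps, assuming ties are broken by a fixed order; in particular the state vector (c_1,...,c_M) returns to the all-zeros state after W steps when started from zero. -/

import Mathlib

/-- Smooth Weighted Round Robin with positive integer weights:
`c` is the sequence of state vectors (current weights), `sel` the sequence of
selected instances, ties broken by the fixed linear order on `Fin M`. -/
theorem swrr_exact_proportionality (M : ℕ) (w : Fin M → ℕ) (hw : ∀ m, 0 < w m)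
    (W : ℕ) (hW : W = ∑ m, w m)
    (c : ℕ → Fin M → ℤ) (sel : ℕ → Fin M)
    (hc0 : ∀ m, c 0 m = 0)
    (hmax : ∀ t m, c t m + w m ≤ c t (sel t) + w (sel t))
    (htie : ∀ t m, c t m + (w m : ℤ) = c t (sel t) + w (sel t) → sel t ≤ m)
    (hstep : ∀ t m, c (t + 1) m =
      if m = sel t then c t m + w m - W else c t m + w m) :
    (∀ t : ℕ, ∀ m : Fin M,
      ((Finset.Ico t (t + W)).filter (fun s => sel s = m)).card = w m) ∧
    (∀ m, c W m = 0) := by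
  by_cases hM : M = 0
  · subst hM
    exact ⟨fun t m => m.elim0, fun m => m.elim0⟩
  have hMpos : 0 < M := Nat.pos_of_ne_zero hM
  have hWpos : 0 < W := by
    rw [hW]
    exact Finset.sum_pos (fun m _ => hw m) ⟨⟨0, hMpos⟩, Finset.mem_univ _⟩
  have hWZ : (0 : ℤ) < W := by exact_mod_cast hWpos
  set N : ℕ → Fin M → ℕ :=
    fun t m => ((Finset.range t).filter (fun s => sel s = m)).card with hNdef
  -- the sum of states is always 0
  have hsum : ∀ t, ∑ m, c t m = 0 := by
    intro t
    induction t with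
    | zero => simp [hc0]
    | succ t ih =>
      have hrw : ∀ m, c (t + 1) m = c t m + w m - (if m = sel t then (W : ℤ) else 0) := by
        intro m
        rw [hstep]
        by_cases h : m = sel t <;> simp [h]
      calc ∑ m, c (t + 1) m
          = ∑ m, (c t m + w m - (if m = sel t then (W : ℤ) else 0)) :=
            Finset.sum_congr rfl (fun m _ => hrw m)
        _ = (∑ m, c t m) + (∑ m, (w m : ℤ)) - (∑ m, (if m = sel t then (W : ℤ) else 0)) := by
            rw [Finset.sum_sub_distrib, Finset.sum_add_distrib]
        _ = 0 := by
            rw [ih, Finset.sum_ite_eq' Finset.univ (sel t) (fun _ => (W : ℤ))]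
            have : (∑ m, (w m : ℤ)) = (W : ℤ) := by rw [hW]; push_cast; ring
            simp [this]
  -- counting step
  have hNsucc : ∀ t m, N (t + 1) m = N t m + (if sel t = m then 1 else 0) := by
    intro t m
    simp only [hNdef, Finset.range_add_one, Finset.filter_insert]
    by_cases h : sel t = m
    · rw [if_pos h, Finset.card_insert_of_notMem (by simp), if_pos h]
    · rw [if_neg h, if_neg h, Nat.add_zero]
  -- the explicit formula for the state
  have hformula : ∀ t m, c t m = (t : ℤ) * w m - (W : ℤ) * N t m := by
    intro t
    induction t with
    | zero => intro m; simp [hc0, hNdef]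
    | succ t ih =>
      intro m
      rw [hstep, hNsucc]
      by_cases h : m = sel t
      · rw [if_pos h, if_pos h.symm, ih]
        push_cast
        ring
      · rw [if_neg h, if_neg (fun hh => h hh.symm), ih]
        push_cast
        ring
  -- lower bound invariant
  have hlow : ∀ t m, -(W : ℤ) < c t m := by
    intro t
    induction t with
    | zero => intro m; rw [hc0]; linarith
    | succ t ih =>
      intro m
      have hselpos : 0 < c t (sel t) + (w (sel t) : ℤ) := by
        have hsum' : (0 : ℤ) < ∑ m, (c t m + (w m : ℤ)) := by
          rw [Finset.sum_add_distrib, hsum t]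
          have : (∑ m, (w m : ℤ)) = (W : ℤ) := by rw [hW]; push_cast; ring
          rw [this]
          linarith
        obtain ⟨m0, _, hm0⟩ := Finset.exists_lt_of_sum_lt (by
          simpa using hsum' : ∑ _m : Fin M, (0 : ℤ) < ∑ m, (c t m + (w m : ℤ)))
        exact lt_of_lt_of_le hm0 (hmax t m0)
      rw [hstep]
      by_cases h : m = sel t
      · rw [if_pos h, h]
        linarith
      · rw [if_neg h]
        have := ih m
        have := hw m
        have : (0 : ℤ) < w m := by exact_mod_cast hw m
        linarith [ih m]
  -- at time W each m has been selected exactly w m times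
  have hNle : ∀ m, N W m ≤ w m := by
    intro m
    have h1 := hlow W m
    rw [hformula W m] at h1
    have h2 : (W : ℤ) * N W m < (W : ℤ) * (w m + 1) := by linarith
    have h3 : (N W m : ℤ) < (w m : ℤ) + 1 := lt_of_mul_lt_mul_left h2 (le_of_lt hWZ)
    exact_mod_cast Int.lt_add_one_iff.mp h3
  have hNsum : ∑ m, N W m = W := by
    have := Finset.card_eq_sum_card_fiberwise
      (f := sel) (s := Finset.range W) (t := Finset.univ) (fun x _ => Finset.mem_univ _)
    rw [Finset.card_range] at this
    exact this.symm
  have hNeq : ∀ m, N W m = w m := by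
    intro m
    by_contra hne
    have hlt : N W m < w m := lt_of_le_of_ne (hNle m) hne
    have : (∑ m, N W m) < ∑ m, w m :=
      Finset.sum_lt_sum (fun i _ => hNle i) ⟨m, Finset.mem_univ m, hlt⟩
    rw [hNsum, ← hW] at this
    exact lt_irrefl _ this
  have hcW : ∀ m, c W m = 0 := by
    intro m
    rw [hformula W m, hNeq m]
    ring
  -- selection is determined by the state
  have hseldet : ∀ t t', (∀ m, c t m = c t' m) → sel t = sel t' := by
    intro t t' hcc
    have h1 : c t' (sel t') + (w (sel t') : ℤ) ≤ c t' (sel t) + w (sel t) := by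
      have := hmax t (sel t')
      rwa [hcc (sel t'), hcc (sel t)] at this
    have h2 : c t' (sel t) + (w (sel t) : ℤ) ≤ c t' (sel t') + w (sel t') := hmax t' (sel t)
    have heq : c t' (sel t) + (w (sel t) : ℤ) = c t' (sel t') + w (sel t') :=
      le_antisymm h2 h1
    have ha : sel t' ≤ sel t := htie t' (sel t) heq
    have hb : sel t ≤ sel t' := by
      have heq' : c t (sel t') + (w (sel t') : ℤ) = c t (sel t) + w (sel t) := by
        rw [hcc (sel t'), hcc (sel t)]
        linarith [heq]
      exact htie t (sel t') heq'
    exact le_antisymm hb ha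
  -- periodicity
  have hper : ∀ s m, c (s + W) m = c s m := by
    intro s
    induction s with
    | zero => intro m; simpa [hc0] using hcW m
    | succ s ih =>
      intro m
      have hseq : sel (s + W) = sel s := hseldet (s + W) s ih
      have : s + 1 + W = (s + W) + 1 := by ring
      rw [this, hstep, hstep, hseq, ih m]
  refine ⟨?_, hcW⟩
  intro t m
  -- N (t+W) m = N t m + w m
  have hNadd : N (t + W) m = N t m + w m := by
    have h1 : c (t + W) m = c t m := hper t m
    rw [hformula (t + W) m, hformula t m] at h1
    have h2 : (W : ℤ) * N (t + W) m = (W : ℤ) * (N t m + w m) := by push_cast at h1 ⊢; linarith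
    have h3 : (N (t + W) m : ℤ) = ((N t m + w m : ℕ) : ℤ) := by
      have := mul_left_cancel₀ (ne_of_gt hWZ) h2
      push_cast
      push_cast at this
      linarith
    exact_mod_cast h3
  -- split the range
  have hunion : Finset.range (t + W) = Finset.range t ∪ Finset.Ico t (t + W) := by
    rw [Finset.range_eq_Ico]
    rw [Finset.range_eq_Ico]; exact (Finset.Ico_union_Ico_eq_Ico (Nat.zero_le t) (Nat.le_add_right t W)).symm
  have hdisj : Disjoint (Finset.range t) (Finset.Ico t (t + W)) := by
    rw [Finset.range_eq_Ico]
    exact Finset.Ico_disjoint_Ico_consecutive 0 t (t + W)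
  have hcards : N (t + W) m =
      N t m + ((Finset.Ico t (t + W)).filter (fun s => sel s = m)).card := by
    simp only [hNdef, hunion, Finset.filter_union]
    exact Finset.card_union_of_disjoint
      (Finset.disjoint_filter_filter hdisj)
  omega
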